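/- Let (H, R) be a quasitriangular Hopf algebra with R = Σ R₁ ⊗ R₂, and define u = Σ S(R₂)R₁. Then u is invertible with inverse Σ S^{-1}(r₂) r₁ where R^{-1} = Σ r₁ ⊗ r₂, and S²(h) = u h u^{-1} for all h ∈ H. -/

import Mathlib

open TensorProduct

open Coalgebra

variable (k H : Type*) [Field k] [Ring H] [HopfAlgebra k H]

/-- Embedding `H ⊗ H → H ⊗ H ⊗ H` on legs 1 and 2. -/
noncomputable def leg12 : H ⊗[k] H →ₐ[k] H ⊗[k] (H ⊗[k] H) :=
  Algebra.TensorProduct.map (AlgHom.id k H) Algebra.TensorProduct.includeLeft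

/-- Embedding `H ⊗ H → H ⊗ H ⊗ H` on legs 1 and 3. -/
noncomputable def leg13 : H ⊗[k] H →ₐ[k] H ⊗[k] (H ⊗[k] H) :=
  Algebra.TensorProduct.map (AlgHom.id k H) Algebra.TensorProduct.includeRight

/-- Embedding `H ⊗ H → H ⊗ H ⊗ H` on legs 2 and 3. -/
noncomputable def leg23 : H ⊗[k] H →ₐ[k] H ⊗[k] (H ⊗[k] H) :=
  Algebra.TensorProduct.includeRight


/-- The Drinfeld element `u = Σ S(R₂) R₁`. -/
noncomputable def drinfeldU (R : H ⊗[k] H) : H :=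
  LinearMap.mul' k H ((TensorProduct.comm k H H)
    ((TensorProduct.map LinearMap.id (HopfAlgebra.antipode (R := k))) R))

section MyInfra




variable (k H : Type*) [Field k] [Ring H] [HopfAlgebra k H]

noncomputable def mA (f g : H →ₗ[k] H) : H ⊗[k] H →ₗ[k] H :=
  LinearMap.mul' k H ∘ₗ TensorProduct.map f g

@[simp] lemma mA_tmul (f g : H →ₗ[k] H) (x y : H) :
    mA k H f g (x ⊗ₜ y) = f x * g y := rfl

noncomputable def innerZ : (H ⊗[k] H) ⊗[k] (H ⊗[k] H) →ₗ[k] H :=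
  LinearMap.mul' k H ∘ₗ
    TensorProduct.map (LinearMap.mul' k H)
      (mA k H (HopfAlgebra.antipode (R := k)) (HopfAlgebra.antipode (R := k)) ∘ₗ
        (TensorProduct.comm k H H).toLinearMap)
      ∘ₗ (TensorProduct.tensorTensorTensorComm k H H H H).toLinearMap

@[simp] lemma innerZ_tmul (y z y' z' : H) :
    innerZ k H ((y ⊗ₜ z) ⊗ₜ (y' ⊗ₜ z')) =
      (y * y') * (HopfAlgebra.antipode (R := k) z' * HopfAlgebra.antipode (R := k) z) := rfl

noncomputable def Phi : (H ⊗[k] (H ⊗[k] H)) ⊗[k] (H ⊗[k] (H ⊗[k] H)) →ₗ[k] H :=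
  LinearMap.mul' k H ∘ₗ
    TensorProduct.map (HopfAlgebra.antipode (R := k) ∘ₗ LinearMap.mul' k H) (innerZ k H)
      ∘ₗ (TensorProduct.tensorTensorTensorComm k H (H ⊗[k] H) H (H ⊗[k] H)).toLinearMap

@[simp] lemma Phi_tmul (x y z x' y' z' : H) :
    Phi k H ((x ⊗ₜ (y ⊗ₜ z)) ⊗ₜ (x' ⊗ₜ (y' ⊗ₜ z'))) =
      HopfAlgebra.antipode (R := k) (x * x') *
        ((y * y') * (HopfAlgebra.antipode (R := k) z' * HopfAlgebra.antipode (R := k) z)) := rfl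


noncomputable def tri3 (f g h : H →ₗ[k] H) : H ⊗[k] (H ⊗[k] H) →ₗ[k] H :=
  LinearMap.mul' k H ∘ₗ TensorProduct.map f (mA k H g h)

@[simp] lemma tri3_tmul (f g h : H →ₗ[k] H) (x y z : H) :
    tri3 k H f g h (x ⊗ₜ (y ⊗ₜ z)) = f x * (g y * h z) := rfl

noncomputable def cyc : H ⊗[k] (H ⊗[k] H) →ₗ[k] H ⊗[k] (H ⊗[k] H) :=
  (TensorProduct.assoc k H H H).toLinearMap ∘ₗ
    (TensorProduct.comm k H (H ⊗[k] H)).toLinearMap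

@[simp] lemma cyc_tmul (x y z : H) :
    cyc k H (x ⊗ₜ (y ⊗ₜ z)) = y ⊗ₜ (z ⊗ₜ x) := rfl

noncomputable def sw23 : H ⊗[k] (H ⊗[k] H) →ₗ[k] H ⊗[k] (H ⊗[k] H) :=
  LinearMap.lTensor H (TensorProduct.comm k H H).toLinearMap

@[simp] lemma sw23_tmul (x y z : H) :
    sw23 k H (x ⊗ₜ (y ⊗ₜ z)) = x ⊗ₜ (z ⊗ₜ y) := rfl

noncomputable def rev : H ⊗[k] (H ⊗[k] H) →ₗ[k] H ⊗[k] (H ⊗[k] H) :=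
  sw23 k H ∘ₗ cyc k H ∘ₗ cyc k H

@[simp] lemma rev_tmul (x y z : H) :
    rev k H (x ⊗ₜ (y ⊗ₜ z)) = z ⊗ₜ (y ⊗ₜ x) := rfl

noncomputable def psiE1 : H ⊗[k] (H ⊗[k] H) →ₗ[k] H ⊗[k] H :=
  (TensorProduct.lid k (H ⊗[k] H)).toLinearMap ∘ₗ
    TensorProduct.map (Coalgebra.counit (R := k)) LinearMap.id

@[simp] lemma psiE1_tmul (x : H) (w : H ⊗[k] H) :
    psiE1 k H (x ⊗ₜ w) = Coalgebra.counit (R := k) x • w := rfl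

noncomputable def psiE2 : H ⊗[k] (H ⊗[k] H) →ₗ[k] H ⊗[k] H :=
  TensorProduct.map LinearMap.id
    ((TensorProduct.rid k H).toLinearMap ∘ₗ
      TensorProduct.map LinearMap.id (Coalgebra.counit (R := k)))

@[simp] lemma psiE2_tmul (x y z : H) :
    psiE2 k H (x ⊗ₜ (y ⊗ₜ z)) = Coalgebra.counit (R := k) z • (x ⊗ₜ y) := by
  simp [psiE2, TensorProduct.tmul_smul]

noncomputable def psiE3 : H ⊗[k] (H ⊗[k] H) →ₗ[k] H ⊗[k] H :=
  TensorProduct.map (mA k H (HopfAlgebra.antipode (R := k)) LinearMap.id) LinearMap.id ∘ₗ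
    (TensorProduct.assoc k H H H).symm.toLinearMap

@[simp] lemma psiE3_tmul (x y z : H) :
    psiE3 k H (x ⊗ₜ (y ⊗ₜ z)) = (HopfAlgebra.antipode (R := k) x * y) ⊗ₜ z := rfl

noncomputable def psiE4 (f : H →ₗ[k] H) : H ⊗[k] (H ⊗[k] H) →ₗ[k] H ⊗[k] H :=
  TensorProduct.map LinearMap.id
    (mA k H f LinearMap.id ∘ₗ (TensorProduct.comm k H H).toLinearMap)

@[simp] lemma psiE4_tmul (f : H →ₗ[k] H) (x y z : H) :
    psiE4 k H f (x ⊗ₜ (y ⊗ₜ z)) = x ⊗ₜ (f z * y) := rfl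

/-- `x ⊗ y ↦ f y * g x` -/
noncomputable def Lmap (f g : H →ₗ[k] H) : H ⊗[k] H →ₗ[k] H :=
  mA k H f g ∘ₗ (TensorProduct.comm k H H).toLinearMap

@[simp] lemma Lmap_tmul (f g : H →ₗ[k] H) (x y : H) :
    Lmap k H f g (x ⊗ₜ y) = f y * g x := rfl

/-- the algebra morphism `ε ⊗ id : H ⊗ H → H`. -/
noncomputable def epsA : H ⊗[k] H →ₐ[k] H :=
  (Algebra.TensorProduct.lid k H).toAlgHom.comp
    (Algebra.TensorProduct.map (Bialgebra.counitAlgHom k H) (AlgHom.id k H))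

@[simp] lemma epsA_tmul (x y : H) :
    epsA k H (x ⊗ₜ y) = Coalgebra.counit (R := k) x • y := rfl

noncomputable def epsB : H ⊗[k] H →ₗ[k] H :=
  (TensorProduct.rid k H).toLinearMap ∘ₗ
    TensorProduct.map LinearMap.id (Coalgebra.counit (R := k))

@[simp] lemma epsB_tmul (x y : H) :
    epsB k H (x ⊗ₜ y) = Coalgebra.counit (R := k) y • x := rfl

/-- the algebra morphism `(Δ ⊗ id)` into `H ⊗ (H ⊗ H)`. -/
noncomputable def Gh : H ⊗[k] H →ₐ[k] H ⊗[k] (H ⊗[k] H) :=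
  (Algebra.TensorProduct.assoc k k k H H H).toAlgHom.comp
    (Algebra.TensorProduct.map (Bialgebra.comulAlgHom k H) (AlgHom.id k H))

@[simp] lemma Gh_tmul (x y : H) :
    Gh k H (x ⊗ₜ y) = (Algebra.TensorProduct.assoc k k k H H H)
      ((Coalgebra.comul (R := k) x) ⊗ₜ[k] y) := rfl



section MyHelpers

variable {k H : Type*} [Field k] [Ring H] [HopfAlgebra k H]

local notation "σ" => HopfAlgebra.antipode (R := k)
local notation "ε" => Coalgebra.counit (R := k)

lemma repr_counit_smul_left {a : H} {ι : Type*} (r : Coalgebra.Repr k a ι) :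
    ∑ i ∈ r.index, ε (r.left i) • r.right i = a := by
  have h := Coalgebra.sum_counit_tmul_eq r
  apply_fun (TensorProduct.lid k H) at h
  rw [map_sum] at h
  simp only [TensorProduct.lid_tmul] at h
  rw [h]; simp

lemma repr_counit_smul_right {a : H} {ι : Type*} (r : Coalgebra.Repr k a ι) :
    ∑ i ∈ r.index, ε (r.right i) • r.left i = a := by
  have h := Coalgebra.sum_tmul_counit_eq r
  apply_fun (TensorProduct.rid k H) at h
  rw [map_sum] at h
  simp only [TensorProduct.rid_tmul] at h
  rw [h]; simp

lemma repr_counit_smul_left_map {a : H} {ι : Type*} (r : Coalgebra.Repr k a ι) (f : H →ₗ[k] H) :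
    ∑ i ∈ r.index, ε (r.left i) • f (r.right i) = f a := by
  simp_rw [← map_smul, ← map_sum, repr_counit_smul_left]

lemma repr_counit_smul_right_map {a : H} {ι : Type*} (r : Coalgebra.Repr k a ι) (f : H →ₗ[k] H) :
    ∑ i ∈ r.index, ε (r.right i) • f (r.left i) = f a := by
  simp_rw [← map_smul, ← map_sum, repr_counit_smul_right]

noncomputable def prodRepr {a b : H} {ι₁ ι₂ : Type*} (ra : Coalgebra.Repr k a ι₁) (rb : Coalgebra.Repr k b ι₂) :
    Coalgebra.Repr k (a * b) (ι₁ × ι₂) where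
  index := ra.index ×ˢ rb.index
  left := fun p => ra.left p.1 * rb.left p.2
  right := fun p => ra.right p.1 * rb.right p.2
  eq := by
    rw [Finset.sum_product, Bialgebra.comul_mul, ← ra.eq, ← rb.eq, Finset.sum_mul_sum]
    simp [Algebra.TensorProduct.tmul_mul_tmul]

@[simp] lemma prodRepr_index {a b : H} {ι₁ ι₂ : Type*} (ra : Coalgebra.Repr k a ι₁) (rb : Coalgebra.Repr k b ι₂) :
    (prodRepr ra rb).index = ra.index ×ˢ rb.index := rfl

@[simp] lemma prodRepr_left {a b : H} {ι₁ ι₂ : Type*} (ra : Coalgebra.Repr k a ι₁) (rb : Coalgebra.Repr k b ι₂)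
    (p : ι₁ × ι₂) : (prodRepr ra rb).left p = ra.left p.1 * rb.left p.2 := rfl

@[simp] lemma prodRepr_right {a b : H} {ι₁ ι₂ : Type*} (ra : Coalgebra.Repr k a ι₁) (rb : Coalgebra.Repr k b ι₂)
    (p : ι₁ × ι₂) : (prodRepr ra rb).right p = ra.right p.1 * rb.right p.2 := rfl

lemma antipode_one' : σ (1 : H) = 1 := by
  have := HopfAlgebra.sum_antipode_mul_eq_smul (R := k) (a := (1 : H))
    ⟨({0} : Finset ℕ), fun _ => 1, fun _ => 1, by
      simp [Bialgebra.comul_one, Algebra.TensorProduct.one_def]⟩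
  simpa using this

lemma helper1 {c d : H} {ι₁ ι₂ : Type*} (rc : Coalgebra.Repr k c ι₁) (rd : Coalgebra.Repr k d ι₂) (e : H) :
    ∑ m ∈ rc.index, ∑ n ∈ rd.index,
      σ (rc.left m * rd.left n) * (rc.right m * rd.right n * e)
    = (ε c * ε d) • e := by
  have hax := HopfAlgebra.sum_antipode_mul_eq_smul (R := k) (a := c * d)
    (⟨rc.index ×ˢ rd.index, fun p => rc.left p.1 * rd.left p.2,
      fun p => rc.right p.1 * rd.right p.2, by
        rw [Finset.sum_product, Bialgebra.comul_mul, ← rc.eq, ← rd.eq, Finset.sum_mul_sum]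
        simp [Algebra.TensorProduct.tmul_mul_tmul]⟩ : Coalgebra.Repr k (c * d) (ι₁ × ι₂))
  dsimp only at hax
  rw [← Finset.sum_product']
  calc (∑ x ∈ rc.index ×ˢ rd.index,
        σ (rc.left x.1 * rd.left x.2) * (rc.right x.1 * rd.right x.2 * e))
      = (∑ x ∈ rc.index ×ˢ rd.index,
          σ (rc.left x.1 * rd.left x.2) * (rc.right x.1 * rd.right x.2)) * e := by
        rw [Finset.sum_mul]
        exact Finset.sum_congr rfl fun x _ => by simp only [mul_assoc]
    _ = (ε c * ε d) • e := by
        rw [hax, Bialgebra.counit_mul, smul_mul_assoc, one_mul]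

lemma helper2 {c d : H} {ι₁ ι₂ : Type*} (rc : Coalgebra.Repr k c ι₁) (rd : Coalgebra.Repr k d ι₂) :
    ∑ m ∈ rc.index, ∑ n ∈ rd.index,
      rc.left m * rd.left n * (σ (rd.right n) * σ (rc.right m))
    = (ε c * ε d) • (1 : H) := by
  have hd := HopfAlgebra.sum_mul_antipode_eq_smul (R := k) rd
  have hc := HopfAlgebra.sum_mul_antipode_eq_smul (R := k) rc
  calc ∑ m ∈ rc.index, ∑ n ∈ rd.index,
        rc.left m * rd.left n * (σ (rd.right n) * σ (rc.right m))
      = ∑ m ∈ rc.index,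
          (rc.left m * ∑ n ∈ rd.index, rd.left n * σ (rd.right n)) * σ (rc.right m) := by
        refine Finset.sum_congr rfl fun m _ => ?_
        rw [Finset.mul_sum, Finset.sum_mul]
        exact Finset.sum_congr rfl fun n _ => by simp only [mul_assoc]
    _ = ∑ m ∈ rc.index, (rc.left m * (ε d • (1 : H))) * σ (rc.right m) := by
        refine Finset.sum_congr rfl fun m _ => ?_
        rw [hd]
    _ = ε d • ∑ m ∈ rc.index, rc.left m * σ (rc.right m) := by
        simp only [mul_smul_comm, mul_one, smul_mul_assoc, ← Finset.smul_sum]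
    _ = (ε c * ε d) • (1 : H) := by rw [hc, smul_smul, mul_comm]

lemma antipode_mul' (a b : H) : σ (a * b) = σ b * σ a := by
  classical
  set ra := Coalgebra.Repr.arbitrary k a with hra
  set rb := Coalgebra.Repr.arbitrary k b with hrb
  set ra1 : ∀ j : H × H, Coalgebra.Repr k (ra.left j) (H × H) :=
    fun j => Coalgebra.Repr.arbitrary k (ra.left j) with hra1
  set ra2 : ∀ j : H × H, Coalgebra.Repr k (ra.right j) (H × H) :=
    fun j => Coalgebra.Repr.arbitrary k (ra.right j) with hra2
  set rb1 : ∀ i : H × H, Coalgebra.Repr k (rb.left i) (H × H) :=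
    fun i => Coalgebra.Repr.arbitrary k (rb.left i) with hrb1
  set rb2 : ∀ i : H × H, Coalgebra.Repr k (rb.right i) (H × H) :=
    fun i => Coalgebra.Repr.arbitrary k (rb.right i) with hrb2
  have ca := Coalgebra.sum_tmul_tmul_eq ra ra1 ra2
  have cb := Coalgebra.sum_tmul_tmul_eq rb rb1 rb2
  have key : Phi k H
      ((∑ j ∈ ra.index, ∑ m ∈ (ra1 j).index,
          (ra1 j).left m ⊗ₜ[k] ((ra1 j).right m ⊗ₜ[k] ra.right j)) ⊗ₜ[k]
       (∑ i ∈ rb.index, ∑ n ∈ (rb1 i).index,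
          (rb1 i).left n ⊗ₜ[k] ((rb1 i).right n ⊗ₜ[k] rb.right i))) =
      Phi k H
      ((∑ j ∈ ra.index, ∑ m ∈ (ra2 j).index,
          ra.left j ⊗ₜ[k] ((ra2 j).left m ⊗ₜ[k] (ra2 j).right m)) ⊗ₜ[k]
       (∑ i ∈ rb.index, ∑ n ∈ (rb2 i).index,
          rb.left i ⊗ₜ[k] ((rb2 i).left n ⊗ₜ[k] (rb2 i).right n))) := by
    rw [ca, cb]
  simp only [TensorProduct.sum_tmul, TensorProduct.tmul_sum, map_sum, Phi_tmul] at key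
  have hL : (∑ i ∈ rb.index, ∑ n ∈ (rb1 i).index, ∑ j ∈ ra.index, ∑ m ∈ (ra1 j).index,
      σ ((ra1 j).left m * (rb1 i).left n) *
        ((ra1 j).right m * (rb1 i).right n * (σ (rb.right i) * σ (ra.right j)))) =
      σ b * σ a := by
    calc (∑ i ∈ rb.index, ∑ n ∈ (rb1 i).index, ∑ j ∈ ra.index, ∑ m ∈ (ra1 j).index,
        σ ((ra1 j).left m * (rb1 i).left n) *
          ((ra1 j).right m * (rb1 i).right n * (σ (rb.right i) * σ (ra.right j))))
        = ∑ i ∈ rb.index, ∑ j ∈ ra.index, ∑ m ∈ (ra1 j).index, ∑ n ∈ (rb1 i).index,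
            σ ((ra1 j).left m * (rb1 i).left n) *
              ((ra1 j).right m * (rb1 i).right n * (σ (rb.right i) * σ (ra.right j))) := by
          refine Finset.sum_congr rfl fun i _ => ?_
          rw [Finset.sum_comm]
          exact Finset.sum_congr rfl fun j _ => Finset.sum_comm
      _ = ∑ i ∈ rb.index, ∑ j ∈ ra.index,
            (ε (ra.left j) * ε (rb.left i)) • (σ (rb.right i) * σ (ra.right j)) := by
          exact Finset.sum_congr rfl fun i _ => Finset.sum_congr rfl fun j _ =>
            helper1 (ra1 j) (rb1 i) _
      _ = (∑ i ∈ rb.index, ε (rb.left i) • σ (rb.right i)) *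
          (∑ j ∈ ra.index, ε (ra.left j) • σ (ra.right j)) := by
          rw [Finset.sum_mul_sum]
          refine Finset.sum_congr rfl fun i _ => Finset.sum_congr rfl fun j _ => ?_
          rw [smul_mul_smul_comm, mul_comm (ε (rb.left i)) (ε (ra.left j))]
      _ = σ b * σ a := by
          rw [repr_counit_smul_left_map rb σ, repr_counit_smul_left_map ra σ]
  have hR : (∑ i ∈ rb.index, ∑ n ∈ (rb2 i).index, ∑ j ∈ ra.index, ∑ m ∈ (ra2 j).index,
      σ (ra.left j * rb.left i) *
        ((ra2 j).left m * (rb2 i).left n * (σ ((rb2 i).right n) * σ ((ra2 j).right m)))) =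
      σ (a * b) := by
    calc (∑ i ∈ rb.index, ∑ n ∈ (rb2 i).index, ∑ j ∈ ra.index, ∑ m ∈ (ra2 j).index,
        σ (ra.left j * rb.left i) *
          ((ra2 j).left m * (rb2 i).left n * (σ ((rb2 i).right n) * σ ((ra2 j).right m))))
        = ∑ i ∈ rb.index, ∑ j ∈ ra.index, ∑ m ∈ (ra2 j).index, ∑ n ∈ (rb2 i).index,
            σ (ra.left j * rb.left i) *
              ((ra2 j).left m * (rb2 i).left n * (σ ((rb2 i).right n) * σ ((ra2 j).right m))) := by
          refine Finset.sum_congr rfl fun i _ => ?_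
          rw [Finset.sum_comm]
          exact Finset.sum_congr rfl fun j _ => Finset.sum_comm
      _ = ∑ i ∈ rb.index, ∑ j ∈ ra.index,
            σ (ra.left j * rb.left i) * ((ε (ra.right j) * ε (rb.right i)) • (1 : H)) := by
          refine Finset.sum_congr rfl fun i _ => Finset.sum_congr rfl fun j _ => ?_
          simp only [← Finset.mul_sum]
          rw [helper2 (ra2 j) (rb2 i)]
      _ = ∑ i ∈ rb.index, ∑ j ∈ ra.index,
            (ε (ra.right j) * ε (rb.right i)) • σ (ra.left j * rb.left i) := by
          simp only [mul_smul_comm, mul_one]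
      _ = σ ((∑ j ∈ ra.index, ε (ra.right j) • ra.left j) *
            (∑ i ∈ rb.index, ε (rb.right i) • rb.left i)) := by
          rw [Finset.sum_comm]
          simp_rw [← map_smul]
          simp only [← map_sum]
          congr 1
          rw [Finset.sum_mul_sum]
          simp only [smul_mul_smul_comm]
      _ = σ (a * b) := by rw [repr_counit_smul_right ra, repr_counit_smul_right rb]
  rw [hL, hR] at key
  exact key.symm



lemma Sinv_one' (Sinv : H →ₗ[k] H) (hS1 : ∀ h : H, Sinv (σ h) = h) :
    Sinv (1 : H) = 1 := by
  conv_lhs => rw [← antipode_one' (k := k) (H := H)]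
  rw [hS1]

lemma Sinv_mul' (Sinv : H →ₗ[k] H) (hS1 : ∀ h : H, Sinv (σ h) = h)
    (hS2 : ∀ h : H, σ (Sinv h) = h) (x y : H) :
    Sinv (x * y) = Sinv y * Sinv x := by
  have h : σ (Sinv y * Sinv x) = x * y := by rw [antipode_mul', hS2, hS2]
  rw [← h, hS1]

lemma sinv_axiom' (Sinv : H →ₗ[k] H) (hS1 : ∀ h : H, Sinv (σ h) = h)
    (hS2 : ∀ h : H, σ (Sinv h) = h) {a : H} {ι : Type*} (r : Coalgebra.Repr k a ι) :
    ∑ j ∈ r.index, Sinv (r.right j) * r.left j = ε a • 1 := by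
  have h := congrArg Sinv (HopfAlgebra.sum_antipode_mul_eq_smul (R := k) r)
  rw [map_sum, map_smul, Sinv_one' Sinv hS1] at h
  calc ∑ j ∈ r.index, Sinv (r.right j) * r.left j
      = ∑ j ∈ r.index, Sinv (σ (r.left j) * r.right j) := by
        refine Finset.sum_congr rfl fun j _ => ?_
        rw [Sinv_mul' Sinv hS1 hS2, hS1]
    _ = ε a • 1 := h

end MyHelpers

end MyInfra


local notation "σ" => HopfAlgebra.antipode (R := k)
local notation "ε" => Coalgebra.counit (R := k)

set_option maxHeartbeats 3200000 in
/-- The Drinfeld element `u = Σ S(R₂)R₁` is invertible with inverse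
`Σ S⁻¹(r₂) r₁` (where `R⁻¹ = Σ r₁ ⊗ r₂`), and `S²(h) = u h u⁻¹`. -/
theorem drinfeld_element_invertible_and_S_squared (R Ri : H ⊗[k] H)
    (hinv : R * Ri = 1) (hinv' : Ri * R = 1)
    (h1 : (Algebra.TensorProduct.assoc k k k H H H)
        ((TensorProduct.map (Coalgebra.comul (R := k)) LinearMap.id) R)
      = leg13 k H R * leg23 k H R)
    (h2 : (TensorProduct.map LinearMap.id (Coalgebra.comul (R := k))) R
      = leg13 k H R * leg12 k H R)
    (h3 : ∀ h : H,
      (TensorProduct.comm k H H) (Coalgebra.comul (R := k) h) * R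
        = R * Coalgebra.comul (R := k) h)
    (Sinv : H →ₗ[k] H)
    (hS1 : ∀ h : H, Sinv (HopfAlgebra.antipode (R := k) h) = h)
    (hS2 : ∀ h : H, HopfAlgebra.antipode (R := k) (Sinv h) = h) :
    drinfeldU k H R *
        (LinearMap.mul' k H ((TensorProduct.comm k H H)
          ((TensorProduct.map LinearMap.id Sinv) Ri))) = 1 ∧
    (LinearMap.mul' k H ((TensorProduct.comm k H H)
          ((TensorProduct.map LinearMap.id Sinv) Ri))) * drinfeldU k H R = 1 ∧
    ∀ h : H,
      HopfAlgebra.antipode (R := k) (HopfAlgebra.antipode (R := k) h)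
        = drinfeldU k H R * h *
            (LinearMap.mul' k H ((TensorProduct.comm k H H)
              ((TensorProduct.map LinearMap.id Sinv) Ri))) := by
  classical
  obtain ⟨sR, hsR⟩ := TensorProduct.exists_finset (R := k) R
  obtain ⟨sr, hsr⟩ := TensorProduct.exists_finset (R := k) Ri
  set rr : ∀ x : H, Coalgebra.Repr k x (H × H) := fun x => Coalgebra.Repr.arbitrary k x with hrr
  set u : H := drinfeldU k H R with hu_def
  set V : H := LinearMap.mul' k H ((TensorProduct.comm k H H)
      ((TensorProduct.map LinearMap.id Sinv) Ri)) with hV_def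
  -- expansion of u
  have hu : u = ∑ p ∈ sR, σ p.2 * p.1 := by
    rw [hu_def, drinfeldU, hsR]
    rw [map_sum, map_sum, map_sum]
    exact Finset.sum_congr rfl fun p _ => by
      simp [LinearMap.mul'_apply]
  -- expansion of hypothesis h1
  have hGx : (Algebra.TensorProduct.assoc k k k H H H)
      ((TensorProduct.map (Coalgebra.comul (R := k)) LinearMap.id) R) =
      ∑ p ∈ sR, ∑ j ∈ (rr p.1).index,
        (rr p.1).left j ⊗ₜ[k] ((rr p.1).right j ⊗ₜ[k] p.2) := by
    rw [hsR, map_sum, map_sum]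
    refine Finset.sum_congr rfl fun p _ => ?_
    rw [TensorProduct.map_tmul, ← (rr p.1).eq, TensorProduct.sum_tmul, map_sum]
    exact Finset.sum_congr rfl fun j _ => by simp
  have hR1 : leg13 k H R * leg23 k H R =
      ∑ p ∈ sR, ∑ q ∈ sR, p.1 ⊗ₜ[k] (q.1 ⊗ₜ[k] (p.2 * q.2)) := by
    rw [hsR, map_sum, map_sum, Finset.sum_mul_sum]
    refine Finset.sum_congr rfl fun p _ => Finset.sum_congr rfl fun q _ => ?_
    simp [leg13, leg23, Algebra.TensorProduct.tmul_mul_tmul]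
  have h1x : (∑ p ∈ sR, ∑ j ∈ (rr p.1).index,
      (rr p.1).left j ⊗ₜ[k] ((rr p.1).right j ⊗ₜ[k] p.2)) =
      ∑ p ∈ sR, ∑ q ∈ sR, p.1 ⊗ₜ[k] (q.1 ⊗ₜ[k] (p.2 * q.2)) := by
    rw [← hGx, ← hR1]; exact h1
  -- expansion of hypothesis h2
  have h2x : (∑ p ∈ sR, ∑ j ∈ (rr p.2).index,
      p.1 ⊗ₜ[k] ((rr p.2).left j ⊗ₜ[k] (rr p.2).right j)) =
      ∑ p ∈ sR, ∑ q ∈ sR, (p.1 * q.1) ⊗ₜ[k] (q.2 ⊗ₜ[k] p.2) := by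
    have hL2 : (TensorProduct.map LinearMap.id (Coalgebra.comul (R := k))) R =
        ∑ p ∈ sR, ∑ j ∈ (rr p.2).index,
          p.1 ⊗ₜ[k] ((rr p.2).left j ⊗ₜ[k] (rr p.2).right j) := by
      rw [hsR, map_sum]
      refine Finset.sum_congr rfl fun p _ => ?_
      rw [TensorProduct.map_tmul, ← (rr p.2).eq, TensorProduct.tmul_sum]
      simp
    have hR2 : leg13 k H R * leg12 k H R =
        ∑ p ∈ sR, ∑ q ∈ sR, (p.1 * q.1) ⊗ₜ[k] (q.2 ⊗ₜ[k] p.2) := by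
      rw [hsR, map_sum, map_sum, Finset.sum_mul_sum]
      refine Finset.sum_congr rfl fun p _ => Finset.sum_congr rfl fun q _ => ?_
      simp [leg12, leg13, Algebra.TensorProduct.tmul_mul_tmul]
    rw [← hL2, ← hR2]; exact h2
  -- (ε ⊗ id) R = 1
  have hw1 : (∑ p ∈ sR, ε p.1 • p.2) = 1 := by
    have e1 := congrArg (psiE1 k H) h1x
    simp only [map_sum, psiE1_tmul] at e1
    have eL : (∑ p ∈ sR, ∑ j ∈ (rr p.1).index,
        ε ((rr p.1).left j) • ((rr p.1).right j ⊗ₜ[k] p.2)) = R := by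
      rw [hsR]
      refine Finset.sum_congr rfl fun p _ => ?_
      simp_rw [TensorProduct.smul_tmul']
      rw [← TensorProduct.sum_tmul, repr_counit_smul_left]
    have eR : (∑ p ∈ sR, ∑ q ∈ sR, ε p.1 • (q.1 ⊗ₜ[k] (p.2 * q.2))) =
        ((1 : H) ⊗ₜ[k] (∑ p ∈ sR, ε p.1 • p.2)) * R := by
      rw [hsR, Finset.mul_sum, Finset.sum_comm]
      refine Finset.sum_congr rfl fun q _ => ?_
      rw [Algebra.TensorProduct.tmul_mul_tmul, one_mul, Finset.sum_mul,
        TensorProduct.tmul_sum]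
      exact Finset.sum_congr rfl fun p _ => by
        rw [smul_mul_assoc, TensorProduct.tmul_smul]
    have hRw : R = ((1 : H) ⊗ₜ[k] (∑ p ∈ sR, ε p.1 • p.2)) * R :=
      eL.symm.trans (e1.trans eR)
    have h1w : ((1 : H) ⊗ₜ[k] (∑ p ∈ sR, ε p.1 • p.2)) = 1 := by
      calc ((1 : H) ⊗ₜ[k] (∑ p ∈ sR, ε p.1 • p.2))
          = (((1 : H) ⊗ₜ[k] (∑ p ∈ sR, ε p.1 • p.2)) * R) * Ri := by
            rw [mul_assoc, hinv, mul_one]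
        _ = R * Ri := by rw [← hRw]
        _ = 1 := hinv
    have := congrArg (epsA k H) h1w
    rw [map_one, epsA_tmul, Bialgebra.counit_one, one_smul] at this
    exact this
  -- (id ⊗ ε) R = 1
  have hw2 : (∑ p ∈ sR, ε p.2 • p.1) = 1 := by
    have e2 := congrArg (psiE2 k H) h2x
    simp only [map_sum, psiE2_tmul] at e2
    have eL : (∑ p ∈ sR, ∑ j ∈ (rr p.2).index,
        ε ((rr p.2).right j) • (p.1 ⊗ₜ[k] (rr p.2).left j)) = R := by
      rw [hsR]
      refine Finset.sum_congr rfl fun p _ => ?_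
      simp_rw [← TensorProduct.tmul_smul]
      rw [← TensorProduct.tmul_sum, repr_counit_smul_right]
    have eR : (∑ p ∈ sR, ∑ q ∈ sR, ε p.2 • ((p.1 * q.1) ⊗ₜ[k] q.2)) =
        ((∑ p ∈ sR, ε p.2 • p.1) ⊗ₜ[k] (1 : H)) * R := by
      rw [hsR, Finset.mul_sum, Finset.sum_comm]
      refine Finset.sum_congr rfl fun q _ => ?_
      rw [Algebra.TensorProduct.tmul_mul_tmul, one_mul, Finset.sum_mul,
        TensorProduct.sum_tmul]
      exact Finset.sum_congr rfl fun p _ => by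
        rw [smul_mul_assoc, TensorProduct.smul_tmul']
    have hRw : R = ((∑ p ∈ sR, ε p.2 • p.1) ⊗ₜ[k] (1 : H)) * R :=
      eL.symm.trans (e2.trans eR)
    have h2w : ((∑ p ∈ sR, ε p.2 • p.1) ⊗ₜ[k] (1 : H)) = 1 := by
      calc ((∑ p ∈ sR, ε p.2 • p.1) ⊗ₜ[k] (1 : H))
          = (((∑ p ∈ sR, ε p.2 • p.1) ⊗ₜ[k] (1 : H)) * R) * Ri := by
            rw [mul_assoc, hinv, mul_one]
        _ = R * Ri := by rw [← hRw]
        _ = 1 := hinv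
    have := congrArg (epsB k H) h2w
    rw [show (1 : H ⊗[k] H) = (1 : H) ⊗ₜ[k] (1 : H) from Algebra.TensorProduct.one_def,
      epsB_tmul, epsB_tmul, Bialgebra.counit_one, one_smul, one_smul] at this
    exact this
  -- (S ⊗ id) R = R⁻¹
  have hA : (∑ p ∈ sR, σ p.1 ⊗ₜ[k] p.2) = Ri := by
    have e3 := congrArg (psiE3 k H) h1x
    simp only [map_sum, psiE3_tmul] at e3
    have eL : (∑ p ∈ sR, ∑ j ∈ (rr p.1).index,
        (σ ((rr p.1).left j) * (rr p.1).right j) ⊗ₜ[k] p.2) = 1 := by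
      calc (∑ p ∈ sR, ∑ j ∈ (rr p.1).index,
            (σ ((rr p.1).left j) * (rr p.1).right j) ⊗ₜ[k] p.2)
          = ∑ p ∈ sR, ((ε p.1 • (1 : H)) ⊗ₜ[k] p.2) := by
            refine Finset.sum_congr rfl fun p _ => ?_
            rw [← TensorProduct.sum_tmul,
              HopfAlgebra.sum_antipode_mul_eq_smul (R := k) (rr p.1)]
        _ = (1 : H) ⊗ₜ[k] (∑ p ∈ sR, ε p.1 • p.2) := by
            rw [TensorProduct.tmul_sum]
            exact Finset.sum_congr rfl fun p _ => by
              rw [TensorProduct.smul_tmul]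
        _ = 1 := by rw [hw1, Algebra.TensorProduct.one_def]
    have eR : (∑ p ∈ sR, ∑ q ∈ sR, (σ p.1 * q.1) ⊗ₜ[k] (p.2 * q.2)) =
        (∑ p ∈ sR, σ p.1 ⊗ₜ[k] p.2) * R := by
      rw [hsR, Finset.sum_mul_sum]
      exact Finset.sum_congr rfl fun p _ => Finset.sum_congr rfl fun q _ => by
        rw [Algebra.TensorProduct.tmul_mul_tmul]
    have hAR : (∑ p ∈ sR, σ p.1 ⊗ₜ[k] p.2) * R = 1 := by
      rw [← eR, ← e3, eL]
    calc (∑ p ∈ sR, σ p.1 ⊗ₜ[k] p.2)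
        = (∑ p ∈ sR, σ p.1 ⊗ₜ[k] p.2) * (R * Ri) := by rw [hinv, mul_one]
      _ = ((∑ p ∈ sR, σ p.1 ⊗ₜ[k] p.2) * R) * Ri := by rw [mul_assoc]
      _ = Ri := by rw [hAR, one_mul]
  -- (id ⊗ S⁻¹) R = R⁻¹
  have hB4 : (∑ p ∈ sR, p.1 ⊗ₜ[k] Sinv p.2) = Ri := by
    have e4 := congrArg (psiE4 k H Sinv) h2x
    simp only [map_sum, psiE4_tmul] at e4
    have eL : (∑ p ∈ sR, ∑ j ∈ (rr p.2).index,
        p.1 ⊗ₜ[k] (Sinv ((rr p.2).right j) * (rr p.2).left j)) = 1 := by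
      calc (∑ p ∈ sR, ∑ j ∈ (rr p.2).index,
            p.1 ⊗ₜ[k] (Sinv ((rr p.2).right j) * (rr p.2).left j))
          = ∑ p ∈ sR, (p.1 ⊗ₜ[k] (ε p.2 • (1 : H))) := by
            refine Finset.sum_congr rfl fun p _ => ?_
            rw [← TensorProduct.tmul_sum, sinv_axiom' Sinv hS1 hS2 (rr p.2)]
        _ = (∑ p ∈ sR, ε p.2 • p.1) ⊗ₜ[k] (1 : H) := by
            rw [TensorProduct.sum_tmul]
            exact Finset.sum_congr rfl fun p _ => by
              rw [TensorProduct.tmul_smul, TensorProduct.smul_tmul']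
        _ = 1 := by rw [hw2, Algebra.TensorProduct.one_def]
    have eR : (∑ p ∈ sR, ∑ q ∈ sR, (p.1 * q.1) ⊗ₜ[k] (Sinv p.2 * q.2)) =
        (∑ p ∈ sR, p.1 ⊗ₜ[k] Sinv p.2) * R := by
      rw [hsR, Finset.sum_mul_sum]
      exact Finset.sum_congr rfl fun p _ => Finset.sum_congr rfl fun q _ => by
        rw [Algebra.TensorProduct.tmul_mul_tmul]
    have hBR : (∑ p ∈ sR, p.1 ⊗ₜ[k] Sinv p.2) * R = 1 := by
      rw [← eR, ← e4, eL]
    calc (∑ p ∈ sR, p.1 ⊗ₜ[k] Sinv p.2)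
        = (∑ p ∈ sR, p.1 ⊗ₜ[k] Sinv p.2) * (R * Ri) := by rw [hinv, mul_one]
      _ = ((∑ p ∈ sR, p.1 ⊗ₜ[k] Sinv p.2) * R) * Ri := by rw [mul_assoc]
      _ = Ri := by rw [hBR, one_mul]
  -- the key commutation lemma: ∑ σ(a₂) u a₁ = ε(a) u
  have hstar : ∀ a : H, (∑ j ∈ (rr a).index,
      σ ((rr a).right j) * (u * (rr a).left j)) = ε a • u := by
    intro a
    have h3a := h3 a
    have lhs3 : (TensorProduct.comm k H H) (Coalgebra.comul (R := k) a) * R =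
        ∑ j ∈ (rr a).index, ∑ p ∈ sR,
          ((rr a).right j * p.1) ⊗ₜ[k] ((rr a).left j * p.2) := by
      rw [← (rr a).eq, map_sum, hsR, Finset.sum_mul_sum]
      exact Finset.sum_congr rfl fun j _ => Finset.sum_congr rfl fun p _ => by
        rw [TensorProduct.comm_tmul, Algebra.TensorProduct.tmul_mul_tmul]
    have rhs3 : R * Coalgebra.comul (R := k) a =
        ∑ p ∈ sR, ∑ j ∈ (rr a).index,
          (p.1 * (rr a).left j) ⊗ₜ[k] (p.2 * (rr a).right j) := by
      rw [← (rr a).eq, hsR, Finset.sum_mul_sum]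
      exact Finset.sum_congr rfl fun p _ => Finset.sum_congr rfl fun j _ => by
        rw [Algebra.TensorProduct.tmul_mul_tmul]
    rw [lhs3, rhs3] at h3a
    have happ := congrArg (Lmap k H σ LinearMap.id) h3a
    simp only [map_sum, Lmap_tmul, LinearMap.id_coe, id_eq] at happ
    have eL : (∑ j ∈ (rr a).index, ∑ p ∈ sR,
        σ ((rr a).left j * p.2) * ((rr a).right j * p.1)) = ε a • u := by
      rw [Finset.sum_comm]
      calc (∑ p ∈ sR, ∑ j ∈ (rr a).index,
            σ ((rr a).left j * p.2) * ((rr a).right j * p.1))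
          = ∑ p ∈ sR, σ p.2 * ((∑ j ∈ (rr a).index,
              σ ((rr a).left j) * (rr a).right j) * p.1) := by
            refine Finset.sum_congr rfl fun p _ => ?_
            rw [Finset.sum_mul, Finset.mul_sum]
            refine Finset.sum_congr rfl fun j _ => ?_
            rw [antipode_mul']
            simp only [mul_assoc]
        _ = ∑ p ∈ sR, ε a • (σ p.2 * p.1) := by
            refine Finset.sum_congr rfl fun p _ => ?_
            rw [HopfAlgebra.sum_antipode_mul_eq_smul (R := k) (rr a),
              smul_mul_assoc, one_mul, mul_smul_comm]
        _ = ε a • u := by rw [← Finset.smul_sum, hu]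
    have eR : (∑ p ∈ sR, ∑ j ∈ (rr a).index,
        σ (p.2 * (rr a).right j) * (p.1 * (rr a).left j)) =
        ∑ j ∈ (rr a).index, σ ((rr a).right j) * (u * (rr a).left j) := by
      rw [Finset.sum_comm]
      refine Finset.sum_congr rfl fun j _ => ?_
      calc (∑ p ∈ sR, σ (p.2 * (rr a).right j) * (p.1 * (rr a).left j))
          = ∑ p ∈ sR, σ ((rr a).right j) * ((σ p.2 * p.1) * (rr a).left j) := by
            refine Finset.sum_congr rfl fun p _ => ?_
            rw [antipode_mul']
            simp only [mul_assoc]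
        _ = σ ((rr a).right j) * ((∑ p ∈ sR, σ p.2 * p.1) * (rr a).left j) := by
            rw [← Finset.mul_sum, ← Finset.sum_mul]
        _ = σ ((rr a).right j) * (u * (rr a).left j) := by rw [← hu]
    rw [eL, eR] at happ
    exact happ.symm
  -- u h = S²(h) u
  have hB2 : ∀ h : H, u * h = σ (σ h) * u := by
    intro h
    have ch := Coalgebra.sum_tmul_tmul_eq (rr h)
      (fun j => rr ((rr h).left j)) (fun j => rr ((rr h).right j))
    have happ := congrArg (tri3 k H (σ ∘ₗ σ) σ (LinearMap.mulLeft k u) ∘ₗ rev k H) ch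
    simp only [map_sum, LinearMap.coe_comp, Function.comp_apply, rev_tmul, tri3_tmul,
      LinearMap.mulLeft_apply] at happ
    -- LHS of happ: ∑_j ∑_m σσ(rh j) * (σ (y m) * (u * x m))
    have eL : (∑ j ∈ (rr h).index, ∑ m ∈ (rr ((rr h).left j)).index,
        σ (σ ((rr h).right j)) * (σ ((rr ((rr h).left j)).right m) *
          (u * (rr ((rr h).left j)).left m))) = σ (σ h) * u := by
      calc (∑ j ∈ (rr h).index, ∑ m ∈ (rr ((rr h).left j)).index,
          σ (σ ((rr h).right j)) * (σ ((rr ((rr h).left j)).right m) *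
            (u * (rr ((rr h).left j)).left m)))
          = ∑ j ∈ (rr h).index, ε ((rr h).left j) • (σ (σ ((rr h).right j)) * u) := by
            refine Finset.sum_congr rfl fun j _ => ?_
            rw [← Finset.mul_sum, hstar ((rr h).left j), mul_smul_comm]
        _ = (∑ j ∈ (rr h).index, ε ((rr h).left j) • σ (σ ((rr h).right j))) * u := by
            rw [Finset.sum_mul]
            exact Finset.sum_congr rfl fun j _ => by rw [smul_mul_assoc]
        _ = σ (σ h) * u := by
            have := repr_counit_smul_left_map (rr h) (σ ∘ₗ σ)
            simp only [LinearMap.comp_apply] at this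
            rw [this]
    have eR : (∑ j ∈ (rr h).index, ∑ m ∈ (rr ((rr h).right j)).index,
        σ (σ ((rr ((rr h).right j)).right m)) * (σ ((rr ((rr h).right j)).left m) *
          (u * (rr h).left j))) = u * h := by
      calc (∑ j ∈ (rr h).index, ∑ m ∈ (rr ((rr h).right j)).index,
          σ (σ ((rr ((rr h).right j)).right m)) * (σ ((rr ((rr h).right j)).left m) *
            (u * (rr h).left j)))
          = ∑ j ∈ (rr h).index,
              (∑ m ∈ (rr ((rr h).right j)).index,
                σ ((rr ((rr h).right j)).left m * σ ((rr ((rr h).right j)).right m))) *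
              (u * (rr h).left j) := by
            refine Finset.sum_congr rfl fun j _ => ?_
            rw [Finset.sum_mul]
            refine Finset.sum_congr rfl fun m _ => ?_
            rw [antipode_mul']
            simp only [mul_assoc]
        _ = ∑ j ∈ (rr h).index, ε ((rr h).right j) • (u * (rr h).left j) := by
            refine Finset.sum_congr rfl fun j _ => ?_
            rw [← map_sum, HopfAlgebra.sum_mul_antipode_eq_smul (R := k)
              (rr ((rr h).right j)), map_smul, antipode_one', smul_mul_assoc, one_mul]
        _ = u * h := by
            simp_rw [← mul_smul_comm]
            rw [← Finset.mul_sum, repr_counit_smul_right]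
    rw [eL, eR] at happ
    exact happ.symm
  -- the identity ∑∑ q₂ σ(p₂) p₁ q₁ = 1
  have idE : (∑ p ∈ sR, ∑ q ∈ sR, q.2 * (σ p.2 * (p.1 * q.1))) = 1 := by
    have happ := congrArg (tri3 k H LinearMap.id σ LinearMap.id ∘ₗ cyc k H) h2x
    simp only [map_sum, LinearMap.coe_comp, Function.comp_apply, cyc_tmul, tri3_tmul,
      LinearMap.id_coe, id_eq] at happ
    have eL : (∑ p ∈ sR, ∑ j ∈ (rr p.2).index,
        (rr p.2).left j * (σ ((rr p.2).right j) * p.1)) = 1 := by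
      calc (∑ p ∈ sR, ∑ j ∈ (rr p.2).index,
            (rr p.2).left j * (σ ((rr p.2).right j) * p.1))
          = ∑ p ∈ sR, (∑ j ∈ (rr p.2).index,
              (rr p.2).left j * σ ((rr p.2).right j)) * p.1 := by
            refine Finset.sum_congr rfl fun p _ => ?_
            rw [Finset.sum_mul]
            exact Finset.sum_congr rfl fun j _ => by rw [mul_assoc]
        _ = ∑ p ∈ sR, ε p.2 • p.1 := by
            refine Finset.sum_congr rfl fun p _ => ?_
            rw [HopfAlgebra.sum_mul_antipode_eq_smul (R := k) (rr p.2),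
              smul_mul_assoc, one_mul]
        _ = 1 := hw2
    rw [eL] at happ
    exact happ.symm
  -- expansion of V
  have hVexp : V = ∑ p ∈ sR, Sinv (Sinv p.2) * p.1 := by
    rw [hV_def, ← hB4, map_sum, map_sum, map_sum]
    exact Finset.sum_congr rfl fun p _ => by simp [LinearMap.mul'_apply]
  -- u * V = 1
  have huv : u * V = 1 := by
    calc u * V = ∑ p ∈ sR, u * (Sinv (Sinv p.2) * p.1) := by rw [hVexp, Finset.mul_sum]
      _ = ∑ p ∈ sR, p.2 * (u * p.1) := by
          refine Finset.sum_congr rfl fun p _ => ?_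
          rw [← mul_assoc, hB2 (Sinv (Sinv p.2)), hS2, hS2, mul_assoc]
      _ = ∑ p ∈ sR, ∑ q ∈ sR, p.2 * (σ q.2 * (q.1 * p.1)) := by
          refine Finset.sum_congr rfl fun p _ => ?_
          rw [hu, Finset.sum_mul, Finset.mul_sum]
          exact Finset.sum_congr rfl fun q _ => by simp only [mul_assoc]
      _ = 1 := by rw [Finset.sum_comm]; exact idE
  -- counit of Ri
  have hepsR : epsA k H R = 1 := by
    rw [hsR, map_sum]
    simp only [epsA_tmul]
    exact hw1
  have hw1' : (∑ q ∈ sr, ε q.1 • q.2) = 1 := by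
    have h' := congrArg (epsA k H) hinv'
    rw [map_mul, map_one, hepsR, mul_one] at h'
    rw [hsr, map_sum] at h'
    simp only [epsA_tmul] at h'
    exact h'
  -- (Δ ⊗ id) Ri = Ri₂₃ Ri₁₃
  have hGR : Gh k H R = leg13 k H R * leg23 k H R := by
    have e : Gh k H R = (Algebra.TensorProduct.assoc k k k H H H)
        ((TensorProduct.map (Coalgebra.comul (R := k)) LinearMap.id) R) := by
      rw [hsR, map_sum, map_sum, map_sum]
      exact Finset.sum_congr rfl fun p _ => by
        rw [Gh_tmul, TensorProduct.map_tmul]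
        simp
    rw [e]; exact h1
  have hGRi : Gh k H Ri = leg23 k H Ri * leg13 k H Ri := by
    have e1 : Gh k H Ri * Gh k H R = 1 := by rw [← map_mul, hinv', map_one]
    have e2 : leg23 k H R * leg23 k H Ri = 1 := by rw [← map_mul, hinv, map_one]
    have e3 : leg13 k H R * leg13 k H Ri = 1 := by rw [← map_mul, hinv, map_one]
    have e4 : (leg13 k H R * leg23 k H R) * (leg23 k H Ri * leg13 k H Ri) = 1 := by
      rw [mul_assoc, ← mul_assoc (leg23 k H R), e2, one_mul, e3]
    calc Gh k H Ri
        = Gh k H Ri * ((leg13 k H R * leg23 k H R) * (leg23 k H Ri * leg13 k H Ri)) := by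
          rw [e4, mul_one]
      _ = (Gh k H Ri * Gh k H R) * (leg23 k H Ri * leg13 k H Ri) := by
          rw [← hGR, ← mul_assoc]
      _ = leg23 k H Ri * leg13 k H Ri := by rw [e1, one_mul]
  have hGix : Gh k H Ri = ∑ q ∈ sr, ∑ j ∈ (rr q.1).index,
      (rr q.1).left j ⊗ₜ[k] ((rr q.1).right j ⊗ₜ[k] q.2) := by
    rw [hsr, map_sum]
    refine Finset.sum_congr rfl fun q _ => ?_
    rw [Gh_tmul, ← (rr q.1).eq, TensorProduct.sum_tmul, map_sum]
    exact Finset.sum_congr rfl fun j _ => by simp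
  have hlegs : leg23 k H Ri * leg13 k H Ri = ∑ q ∈ sr, ∑ p ∈ sr,
      p.1 ⊗ₜ[k] (q.1 ⊗ₜ[k] (q.2 * p.2)) := by
    rw [hsr, map_sum, map_sum, Finset.sum_mul_sum]
    refine Finset.sum_congr rfl fun q _ => Finset.sum_congr rfl fun p _ => ?_
    simp [leg13, leg23, Algebra.TensorProduct.tmul_mul_tmul]
  have hGx2 : (∑ q ∈ sr, ∑ j ∈ (rr q.1).index,
      (rr q.1).left j ⊗ₜ[k] ((rr q.1).right j ⊗ₜ[k] q.2)) =
      ∑ q ∈ sr, ∑ p ∈ sr, p.1 ⊗ₜ[k] (q.1 ⊗ₜ[k] (q.2 * p.2)) := by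
    rw [← hGix, ← hlegs]; exact hGRi
  -- ∑ σ(q₂) S⁻¹(q₁) over Ri equals u
  have huu : (∑ q ∈ sr, σ q.2 * Sinv q.1) = u := by
    have h' := hA
    rw [hsr] at h'
    have h'' := congrArg (Lmap k H σ Sinv) h'
    simp only [map_sum, Lmap_tmul] at h''
    rw [hu]
    refine Eq.trans ?_ (Eq.trans h''.symm ?_)
    · rfl
    · refine Finset.sum_congr rfl fun p _ => by rw [hS1]
  -- the identity ∑_{Ri} σ(p₂) u p₁ = 1
  have idH : (∑ p ∈ sr, σ p.2 * (u * p.1)) = 1 := by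
    have happ := congrArg (tri3 k H σ Sinv LinearMap.id ∘ₗ rev k H) hGx2
    simp only [map_sum, LinearMap.coe_comp, Function.comp_apply, rev_tmul, tri3_tmul,
      LinearMap.id_coe, id_eq] at happ
    have eL : (∑ q ∈ sr, ∑ j ∈ (rr q.1).index,
        σ q.2 * (Sinv ((rr q.1).right j) * (rr q.1).left j)) = 1 := by
      calc (∑ q ∈ sr, ∑ j ∈ (rr q.1).index,
            σ q.2 * (Sinv ((rr q.1).right j) * (rr q.1).left j))
          = ∑ q ∈ sr, ε q.1 • σ q.2 := by
            refine Finset.sum_congr rfl fun q _ => ?_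
            rw [← Finset.mul_sum, sinv_axiom' Sinv hS1 hS2 (rr q.1),
              mul_smul_comm, mul_one]
        _ = σ (∑ q ∈ sr, ε q.1 • q.2) := by simp_rw [← map_smul]; rw [← map_sum]
        _ = 1 := by rw [hw1', antipode_one']
    have eR : (∑ q ∈ sr, ∑ p ∈ sr, σ (q.2 * p.2) * (Sinv q.1 * p.1)) =
        ∑ p ∈ sr, σ p.2 * (u * p.1) := by
      rw [Finset.sum_comm]
      refine Finset.sum_congr rfl fun p _ => ?_
      calc (∑ q ∈ sr, σ (q.2 * p.2) * (Sinv q.1 * p.1))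
          = ∑ q ∈ sr, σ p.2 * ((σ q.2 * Sinv q.1) * p.1) := by
            refine Finset.sum_congr rfl fun q _ => ?_
            rw [antipode_mul']
            simp only [mul_assoc]
        _ = σ p.2 * ((∑ q ∈ sr, σ q.2 * Sinv q.1) * p.1) := by
            rw [← Finset.mul_sum, ← Finset.sum_mul]
        _ = σ p.2 * (u * p.1) := by rw [huu]
    rw [eL, eR] at happ
    exact happ.symm
  -- left inverse of u
  have hcu : (∑ p ∈ sr, σ p.2 * σ (σ p.1)) * u = 1 := by
    calc (∑ p ∈ sr, σ p.2 * σ (σ p.1)) * u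
        = ∑ p ∈ sr, σ p.2 * (u * p.1) := by
          rw [Finset.sum_mul]
          refine Finset.sum_congr rfl fun p _ => ?_
          rw [mul_assoc, ← hB2 p.1]
      _ = 1 := idH
  have hVu : V * u = 1 := by
    have hcV : (∑ p ∈ sr, σ p.2 * σ (σ p.1)) = V := by
      calc (∑ p ∈ sr, σ p.2 * σ (σ p.1))
          = (∑ p ∈ sr, σ p.2 * σ (σ p.1)) * (u * V) := by rw [huv, mul_one]
        _ = ((∑ p ∈ sr, σ p.2 * σ (σ p.1)) * u) * V := by rw [mul_assoc]
        _ = V := by rw [hcu, one_mul]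
    rw [← hcV]; exact hcu
  refine ⟨huv, hVu, fun h => ?_⟩
  calc σ (σ h) = σ (σ h) * (u * V) := by rw [huv, mul_one]
    _ = (σ (σ h) * u) * V := by rw [← mul_assoc]
    _ = (u * h) * V := by rw [← hB2 h]
    _ = u * h * V := rfl
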